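/- arXiv:1806.07033 — 3 statements merged into one kernel-verified Lean document; each statement's English description precedes it below -/
import Mathlib

section
/- For Hermitian positive semi-definite matrices A and B in C^{n×n}, A:B = B:A, i.e., A(A+B)^† B = B(A+B)^† A. -/
open scoped Matrix Matrix.Norms.L2Operator ComplexOrder

/-- `MPInv A B` means `B` is the Moore-Penrose inverse of `A`. -/
def MPInv {n : ℕ} (A B : Matrix (Fin n) (Fin n) ℂ) : Prop :=
  A * B * A = A ∧ B * A * B = B ∧ (A * B).IsHermitian ∧ (B * A).IsHermitian

/-!
If `P (A + B) = 0` then `P A Pᴴ + P B Pᴴ = 0` is a sum of positive semidefinite matrices, so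
`P A Pᴴ = 0`, and writing `A = Cᴴ C` gives `P A = 0`. For `G` with `(A + B) G (A + B) = A + B`,
applying this to `P = 1 - (A + B) G`, and its mirror image on the right, gives
`(A + B) G A = A = A G (A + B)`, whence `A G B = A - A G A = B G A`.
-/

namespace Matrix.PosSemidef

open scoped MatrixOrder

variable {𝕜 m n : Type*} [RCLike 𝕜] [Fintype n] {A B : Matrix n n 𝕜}

theorem mul_eq_zero_of_mul_mul_conjTranspose_eq_zero (hA : A.PosSemidef) {P : Matrix m n 𝕜}
    (h : P * A * Pᴴ = 0) : P * A = 0 := by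
  classical
  obtain ⟨C, rfl⟩ := CStarAlgebra.nonneg_iff_eq_star_mul_self.mp hA.nonneg
  have hCP : C * Pᴴ = 0 := by
    rw [← conjTranspose_mul_self_eq_zero, conjTranspose_mul, conjTranspose_conjTranspose]
    simpa only [star_eq_conjTranspose, Matrix.mul_assoc] using h
  have hPC : P * Cᴴ = 0 := by
    rw [← conjTranspose_eq_zero, conjTranspose_mul, conjTranspose_conjTranspose, hCP]
  rw [star_eq_conjTranspose, ← Matrix.mul_assoc, hPC, Matrix.zero_mul]

theorem mul_eq_zero_of_mul_add_eq_zero [Fintype m] (hA : A.PosSemidef) (hB : B.PosSemidef)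
    {P : Matrix m n 𝕜} (h : P * (A + B) = 0) : P * A = 0 := by
  have hsum : P * A * Pᴴ + P * B * Pᴴ = 0 := by
    rw [← Matrix.add_mul, ← Matrix.mul_add, h, Matrix.zero_mul]
  refine hA.mul_eq_zero_of_mul_mul_conjTranspose_eq_zero ?_
  exact ((add_eq_zero_iff_of_nonneg (hA.mul_mul_conjTranspose_same P).nonneg
    (hB.mul_mul_conjTranspose_same P).nonneg).mp hsum).1

theorem mul_eq_zero_of_add_mul_eq_zero [Fintype m] (hA : A.PosSemidef) (hB : B.PosSemidef)
    {P : Matrix n m 𝕜} (h : (A + B) * P = 0) : A * P = 0 := by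
  have hP : Pᴴ * (A + B) = 0 := by
    rw [← (hA.isHermitian.add hB.isHermitian).eq, ← conjTranspose_mul, h, conjTranspose_zero]
  rw [← conjTranspose_eq_zero, conjTranspose_mul, hA.isHermitian.eq]
  exact mul_eq_zero_of_mul_add_eq_zero hA hB hP

variable [DecidableEq n] {G : Matrix n n 𝕜}

theorem add_mul_mul_eq_self (hA : A.PosSemidef) (hB : B.PosSemidef)
    (hG : (A + B) * G * (A + B) = A + B) : (A + B) * G * A = A := by
  have h : (1 - (A + B) * G) * (A + B) = 0 := by rw [Matrix.sub_mul, hG, Matrix.one_mul, sub_self]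
  have := mul_eq_zero_of_mul_add_eq_zero hA hB h
  rwa [Matrix.sub_mul, Matrix.one_mul, sub_eq_zero, eq_comm] at this

theorem mul_mul_add_eq_self (hA : A.PosSemidef) (hB : B.PosSemidef)
    (hG : (A + B) * G * (A + B) = A + B) : A * G * (A + B) = A := by
  have h : (A + B) * (1 - G * (A + B)) = 0 := by
    rw [Matrix.mul_sub, ← Matrix.mul_assoc, hG, Matrix.mul_one, sub_self]
  have := mul_eq_zero_of_add_mul_eq_zero hA hB h
  rwa [Matrix.mul_sub, ← Matrix.mul_assoc, Matrix.mul_one, sub_eq_zero, eq_comm] at this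

theorem mul_mul_comm_of_add_mul_mul_add (hA : A.PosSemidef) (hB : B.PosSemidef)
    (hG : (A + B) * G * (A + B) = A + B) : A * G * B = B * G * A := by
  calc A * G * B = A * G * (A + B) - A * G * A := by rw [Matrix.mul_add, add_sub_cancel_left]
    _ = (A + B) * G * A - A * G * A := by
      rw [mul_mul_add_eq_self hA hB hG, add_mul_mul_eq_self hA hB hG]
    _ = B * G * A := by rw [Matrix.add_mul, Matrix.add_mul, add_sub_cancel_left]

end Matrix.PosSemidef

/-- The parallel sum is commutative: A:B = B:A. -/
theorem parallel_sum_comm {n : ℕ} (A B Sd : Matrix (Fin n) (Fin n) ℂ)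
    (hA : A.PosSemidef) (hB : B.PosSemidef) (hSd : MPInv (A + B) Sd) :
    A * Sd * B = B * Sd * A :=
  hA.mul_mul_comm_of_add_mul_mul_add hB hSd.1
end

section
/- If X and Y are commuting Hermitian positive semi-definite matrices, then X∨Y = (X + Y + |X−Y|)/2, where |M| denotes (M*M)^{1/2}; consequently ‖X∨Y‖ = max{‖X‖, ‖Y‖}. -/
open scoped Matrix Matrix.Norms.L2Operator ComplexOrder

/-- The square root of a positive semi-definite matrix, as `Matrix.PosSemidef.sqrt` was defined
in Mathlib (December 2024); it was removed since. -/
noncomputable def Matrix.PosSemidef.sqrt {n 𝕜 : Type*} [Fintype n] [RCLike 𝕜] [DecidableEq n]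
    {A : Matrix n n 𝕜} (hA : A.PosSemidef) : Matrix n n 𝕜 :=
  hA.1.eigenvectorUnitary.1 * Matrix.diagonal ((↑) ∘ (√·) ∘ hA.1.eigenvalues) *
    (star hA.1.eigenvectorUnitary : Matrix n n 𝕜)

/-!
Everything is a function of the commuting self-adjoint matrices `S = X + Y` and `D = X - Y`.
The Moore–Penrose inverse of `S` is `S⁺ = cfc (·⁻¹) S`, so it commutes with `X` and `Y`, and
`D² = S² - 4XY` turns the matrix under the square root defining `W^{1/2}` into
`(|D|/2) S⁺ (|D|/2)`. Hence `W^{1/2} = (S⁺)^{1/2} (|D|/2) (S⁺)^{1/2}` and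
`S^{1/2} W^{1/2} S^{1/2} = (|D|/2) S⁺ S`. The factor `S⁺ S` is harmless because `|D| ≤ S`
(for commuting `a, b ≥ 0`, `(a + b)² - (a - b)² = 4ab ≥ 0` and the square root is operator
monotone), so `|D|` vanishes wherever `S` does.

For the norm, `(X + Y + |D|)/2` equals both `X + D⁻` and `Y + D⁺`, so it dominates `X` and `Y`;
conversely, `|a - b| ≤ a + b` applied to `m - Y` and `m - X`, with `m = max ‖X‖ ‖Y‖`, gives
`(X + Y + |D|)/2 ≤ m`.
-/

open scoped MatrixOrder
open CFC

section CStarAlgebra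

variable {A : Type*} [CStarAlgebra A] [PartialOrder A] [StarOrderedRing A]

theorem Commute.cfcAbs_left_of_isSelfAdjoint {a b : A} (ha : IsSelfAdjoint a) (h : Commute a b) :
    Commute (abs a) b := by
  rw [abs_eq_cfc_norm a ha]
  exact h.cfc_real _

theorem Commute.cfcSqrt_left {a b : A} (h : Commute a b) : Commute (sqrt a) b := by
  rw [sqrt_eq_cfc]
  exact h.cfc_nnreal _

theorem CFC.abs_sub_le_add {a b : A} (ha : 0 ≤ a) (hb : 0 ≤ b) (hab : Commute a b) :
    abs (a - b) ≤ a + b := by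
  have hsq : star (a - b) * (a - b) ≤ (a + b) * (a + b) := by
    rw [star_sub, ha.isSelfAdjoint.star_eq, hb.isSelfAdjoint.star_eq, ← sub_nonneg]
    have hdiff : (a + b) * (a + b) - (a - b) * (a - b) = a * b + a * b + (a * b + a * b) := by
      simp only [mul_add, add_mul, mul_sub, sub_mul, ← hab.eq]
      abel
    have hab_nonneg : 0 ≤ a * b := hab.mul_nonneg ha hb
    rw [hdiff]
    positivity
  calc abs (a - b) ≤ sqrt ((a + b) * (a + b)) := sqrt_le_sqrt _ _ hsq
    _ = a + b := sqrt_mul_self _ (add_nonneg ha hb)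

theorem mul_eq_zero_of_le_of_mul_eq_zero {a b q : A} (ha : 0 ≤ a) (hab : a ≤ b)
    (hb : b * q = 0) : a * q = 0 := by
  have hconj : star q * a * q = 0 := by
    refine le_antisymm ?_ (star_left_conjugate_nonneg ha q)
    calc star q * a * q ≤ star q * b * q := star_left_conjugate_le_conjugate hab q
      _ = 0 := by rw [mul_assoc, hb, mul_zero]
  have hroot : sqrt a * q = 0 := by
    rw [← CStarRing.star_mul_self_eq_zero_iff, star_mul, (sqrt_nonneg a).isSelfAdjoint.star_eq]
    simpa only [mul_assoc, ← mul_assoc (sqrt a), sqrt_mul_sqrt_self a ha] using hconj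
  rw [← sqrt_mul_sqrt_self a ha, mul_assoc, hroot, mul_zero]

theorem CFC.norm_inv_two_smul_add_add_abs_sub {a b : A} (ha : 0 ≤ a) (hb : 0 ≤ b)
    (hab : Commute a b) : ‖(2 : ℂ)⁻¹ • (a + b + abs (a - b))‖ = max ‖a‖ ‖b‖ := by
  set m := max ‖a‖ ‖b‖
  have hd : IsSelfAdjoint (a - b) := ha.isSelfAdjoint.sub hb.isSelfAdjoint
  have hza : (2 : ℂ)⁻¹ • (a + b + abs (a - b)) = a + (a - b)⁻ := by
    linear_combination (norm := module) (2 : ℂ)⁻¹ • abs_sub_self (a - b)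
  have hzb : (2 : ℂ)⁻¹ • (a + b + abs (a - b)) = b + (a - b)⁺ := by
    linear_combination (norm := module) (2 : ℂ)⁻¹ • abs_add_self (a - b)
  have hz : 0 ≤ (2 : ℂ)⁻¹ • (a + b + abs (a - b)) :=
    hza ▸ add_nonneg ha (negPart_nonneg _)
  have hma : 0 ≤ algebraMap ℝ A m - a := sub_nonneg.mpr <|
    ha.isSelfAdjoint.le_algebraMap_norm_self.trans (algebraMap_mono A (le_max_left ..))
  have hmb : 0 ≤ algebraMap ℝ A m - b := sub_nonneg.mpr <|
    hb.isSelfAdjoint.le_algebraMap_norm_self.trans (algebraMap_mono A (le_max_right ..))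
  have hupper : (2 : ℂ)⁻¹ • (a + b + abs (a - b)) ≤ algebraMap ℝ A m := by
    have hcomm : Commute (algebraMap ℝ A m - b) (algebraMap ℝ A m - a) :=
      .sub_left (.sub_right (Algebra.commute_algebraMap_left _ _)
        (Algebra.commute_algebraMap_left _ _))
        (.sub_right (Algebra.commute_algebraMap_right _ _) hab.symm)
    have habs := abs_sub_le_add hmb hma hcomm
    rw [sub_sub_sub_cancel_left] at habs
    calc (2 : ℂ)⁻¹ • (a + b + abs (a - b))
        ≤ (2 : ℂ)⁻¹ • (a + b + (algebraMap ℝ A m - b + (algebraMap ℝ A m - a))) := by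
          gcongr
      _ = algebraMap ℝ A m := by module
  refine le_antisymm ((CStarAlgebra.norm_le_iff_le_algebraMap _ (by positivity) hz).mpr hupper)
    (max_le ?_ ?_)
  · exact CStarAlgebra.norm_le_norm_of_nonneg_of_le ha
      (hza ▸ le_add_of_nonneg_right (negPart_nonneg _))
  · exact CStarAlgebra.norm_le_norm_of_nonneg_of_le hb
      (hzb ▸ le_add_of_nonneg_right (posPart_nonneg _))

theorem CFC.inv_four_smul_add_sub_mul_mul {x y s : A} (hx : IsSelfAdjoint x)
    (hy : IsSelfAdjoint y) (hxy : Commute x y) (hs : (x + y) * s * (x + y) = x + y)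
    (hsx : Commute s x) (hsy : Commute s y) :
    (4 : ℂ)⁻¹ • (x + y) - x * s * y
      = ((2 : ℂ)⁻¹ • abs (x - y)) * s * ((2 : ℂ)⁻¹ • abs (x - y)) := by
  have habs : Commute (abs (x - y)) s :=
    (hsx.sub_right hsy).symm.cfcAbs_left_of_isSelfAdjoint (hx.sub hy)
  have hsq : abs (x - y) * abs (x - y) = (x + y) * (x + y) - (4 : ℂ) • (x * y) := by
    rw [abs_mul_abs, (hx.sub hy).star_eq]
    simp only [mul_sub, sub_mul, mul_add, add_mul, ← hxy.eq]
    module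
  have hS : (x + y) * (x + y) * s = x + y := by
    rw [mul_assoc, ← (hsx.add_right hsy).eq, ← mul_assoc, hs]
  calc (4 : ℂ)⁻¹ • (x + y) - x * s * y
        = (4 : ℂ)⁻¹ • ((x + y) * (x + y) * s) - x * y * s := by
        rw [hS, mul_assoc x y, ← hsy.eq, ← mul_assoc]
    _ = (4 : ℂ)⁻¹ • (abs (x - y) * abs (x - y) * s) := by
        rw [hsq, sub_mul, smul_mul_assoc, smul_sub, smul_smul]
        norm_num
    _ = _ := by
        rw [smul_mul_assoc, smul_mul_assoc, mul_smul_comm, smul_smul, mul_assoc _ s, ← habs.eq,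
          ← mul_assoc]
        norm_num

theorem CFC.sqrt_add_mul_mul_sqrt_add {x y s h w : A} (hx : 0 ≤ x) (hy : 0 ≤ y)
    (hxy : Commute x y) (hs : (x + y) * s * (x + y) = x + y) (hsx : Commute s x)
    (hsy : Commute s y) (hh : 0 ≤ h) (hh2 : h * h = s) (hw : 0 ≤ w)
    (hw2 : w * w = h * ((4 : ℂ)⁻¹ • (x + y) - x * s * y) * h) :
    sqrt (x + y) * w * sqrt (x + y) = (2 : ℂ)⁻¹ • abs (x - y) := by
  set b := (2 : ℂ)⁻¹ • abs (x - y)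
  have hd : IsSelfAdjoint (x - y) := hx.isSelfAdjoint.sub hy.isSelfAdjoint
  have hSd : Commute (x + y) (x - y) :=
    .add_left (.sub_right (.refl x) hxy) (.sub_right hxy.symm (.refl y))
  have hsb : Commute s b :=
    ((hsx.sub_right hsy).symm.cfcAbs_left_of_isSelfAdjoint hd).symm.smul_right _
  have hhb : Commute h b := by
    rw [← (sqrt_eq_iff s h (hh2 ▸ hh.isSelfAdjoint.mul_self_nonneg) hh).mpr hh2]
    exact hsb.cfcSqrt_left
  have hrb : Commute (sqrt (x + y)) b :=
    (hSd.symm.cfcAbs_left_of_isSelfAdjoint hd).symm.cfcSqrt_left.smul_right _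
  have hrs : Commute (sqrt (x + y)) s := (hsx.add_right hsy).symm.cfcSqrt_left
  have hw_eq : w = h * b * h := by
    have hb : 0 ≤ b := smul_nonneg (by positivity) (abs_nonneg _)
    refine (mul_self_eq_mul_self_iff w _ hw (conjugate_nonneg_of_nonneg hb hh)).mp ?_
    rw [hw2, inv_four_smul_add_sub_mul_mul hx.isSelfAdjoint hy.isSelfAdjoint hxy hs hsx hsy,
      ← hh2]
    simp only [mul_assoc]
    rfl
  have hker : b * (1 - s * (x + y)) = 0 := by
    have hS : (x + y) * (1 - s * (x + y)) = 0 := by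
      rw [mul_sub, mul_one, ← mul_assoc, hs, sub_self]
    rw [smul_mul_assoc, mul_eq_zero_of_le_of_mul_eq_zero (abs_nonneg _)
      (abs_sub_le_add hx hy hxy) hS, smul_zero]
  calc sqrt (x + y) * w * sqrt (x + y) = sqrt (x + y) * (b * s) * sqrt (x + y) := by
        rw [hw_eq, hhb.eq, mul_assoc b, hh2]
    _ = b * s * (x + y) := by
        rw [(hrb.mul_right hrs).eq, mul_assoc, sqrt_mul_sqrt_self _ (add_nonneg hx hy)]
    _ = b := by
        rw [mul_sub, mul_one, sub_eq_zero] at hker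
        rw [mul_assoc, ← hker]

end CStarAlgebra

theorem Matrix.PosSemidef.sqrt_eq_cfcSqrt {n 𝕜 : Type*} [Fintype n] [DecidableEq n] [RCLike 𝕜]
    {A : Matrix n n 𝕜} (hA : A.PosSemidef) : hA.sqrt = CFC.sqrt A := by
  rw [CFC.sqrt_eq_real_sqrt A hA.nonneg, cfcₙ_eq_cfc, hA.1.cfc_eq]
  rfl

namespace MPInv

variable {n : ℕ} {A B C : Matrix (Fin n) (Fin n) ℂ}

theorem unique (hB : MPInv A B) (hC : MPInv A C) : B = C := by
  obtain ⟨hB1, hB2, hB3, hB4⟩ := hB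
  obtain ⟨hC1, hC2, hC3, hC4⟩ := hC
  have hAB : A * B = A * C := by
    calc A * B = (A * C) * (A * B) := by rw [← Matrix.mul_assoc, hC1]
    _ = (A * C)ᴴ * (A * B)ᴴ := by rw [hC3, hB3]
    _ = Cᴴ * (A * B * A)ᴴ := by simp only [Matrix.conjTranspose_mul, Matrix.mul_assoc]
    _ = A * C := by rw [hB1, ← Matrix.conjTranspose_mul, hC3]
  have hBA : B * A = C * A := by
    calc B * A = (B * A) * (C * A) := by rw [Matrix.mul_assoc B, ← Matrix.mul_assoc A, hC1]
    _ = (B * A)ᴴ * (C * A)ᴴ := by rw [hB4, hC4]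
    _ = (A * B * A)ᴴ * Cᴴ := by simp only [Matrix.conjTranspose_mul, Matrix.mul_assoc]
    _ = C * A := by rw [hB1, ← Matrix.conjTranspose_mul, hC4]
  rw [← hB2, Matrix.mul_assoc, hAB, ← Matrix.mul_assoc, hBA, hC2]

theorem cfc_inv (hA : IsSelfAdjoint A) : MPInv A (cfc (·⁻¹ : ℝ → ℝ) A) := by
  -- the spectrum is finite, so `·⁻¹` is continuous on it even when it contains `0`
  have hcont (f : ℝ → ℝ) : ContinuousOn f (spectrum ℝ A) :=
    A.finite_real_spectrum.continuousOn f
  have hmul (f g : ℝ → ℝ) : cfc f A * cfc g A = cfc (fun t ↦ f t * g t) A :=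
    (cfc_mul f g A (hcont f) (hcont g)).symm
  have hmul₃ (f g h : ℝ → ℝ) :
      cfc f A * cfc g A * cfc h A = cfc (fun t ↦ f t * g t * h t) A := by
    rw [hmul, hmul]
  have hid : cfc (fun t : ℝ ↦ t) A = A := cfc_id' ℝ A
  refine ⟨?_, ?_, ?_, ?_⟩
  · calc A * cfc (·⁻¹) A * A
          = cfc (fun t ↦ t) A * cfc (·⁻¹) A * cfc (fun t ↦ t) A := by rw [hid]
      _ = A := by
          rw [hmul₃]
          simp only [mul_inv_mul_cancel, hid]
  · calc cfc (·⁻¹) A * A * cfc (·⁻¹) A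
          = cfc (·⁻¹) A * cfc (fun t ↦ t) A * cfc (·⁻¹) A := by rw [hid]
      _ = cfc (·⁻¹) A := by
          rw [hmul₃]
          congr 1
          ext t
          simpa only [inv_inv] using mul_inv_mul_cancel t⁻¹
  · have h : IsSelfAdjoint (cfc (fun t ↦ t) A * cfc (·⁻¹) A) :=
      hmul _ _ ▸ cfc_predicate _ A
    rwa [hid] at h
  · have h : IsSelfAdjoint (cfc (·⁻¹) A * cfc (fun t ↦ t) A) :=
      hmul _ _ ▸ cfc_predicate _ A
    rwa [hid] at h

theorem commute (hB : MPInv A B) (hA : IsSelfAdjoint A) (hC : Commute A C) : Commute B C :=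
  hB.unique (cfc_inv hA) ▸ hC.cfc_real _

end MPInv

/-- For commuting PSD matrices, X∨Y = (X + Y + |X - Y|)/2 and ‖X∨Y‖ = max ‖X‖ ‖Y‖. -/
theorem sup_of_commute {n : ℕ} (X Y Sd Sdh Wh : Matrix (Fin n) (Fin n) ℂ)
    (hX : X.PosSemidef) (hY : Y.PosSemidef) (hcomm : X * Y = Y * X)
    (hSd : MPInv (X + Y) Sd)
    (hSdh : Sdh.PosSemidef) (hSdh2 : Sdh * Sdh = Sd)
    (hWh : Wh.PosSemidef)
    (hWh2 : Wh * Wh = Sdh * ((4 : ℂ)⁻¹ • (X + Y) - X * Sd * Y) * Sdh) :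
    (2 : ℂ)⁻¹ • (X + Y) + (hX.add hY).sqrt * Wh * (hX.add hY).sqrt
      = (2 : ℂ)⁻¹ • (X + Y + (Matrix.posSemidef_conjTranspose_mul_self (X - Y)).sqrt) ∧
    ‖(2 : ℂ)⁻¹ • (X + Y) + (hX.add hY).sqrt * Wh * (hX.add hY).sqrt‖
      = max ‖X‖ ‖Y‖ := by
  have hS : IsSelfAdjoint (X + Y) := (hX.add hY).isHermitian
  have hSdX : Commute Sd X := hSd.commute hS (.add_left (.refl X) hcomm.symm)
  have hSdY : Commute Sd Y := hSd.commute hS (.add_left hcomm (.refl Y))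
  have hmid := sqrt_add_mul_mul_sqrt_add hX.nonneg hY.nonneg hcomm hSd.1 hSdX hSdY
    hSdh.nonneg hSdh2 hWh.nonneg hWh2
  rw [(hX.add hY).sqrt_eq_cfcSqrt, hmid,
    (Matrix.posSemidef_conjTranspose_mul_self (X - Y)).sqrt_eq_cfcSqrt,
    ← smul_add]
  exact ⟨rfl, norm_inv_two_smul_add_add_abs_sub hX.nonneg hY.nonneg hcomm⟩
end

section
/- Let A, B, X be Hermitian positive semi-definite matrices in C^{n×n}. Then ‖(A+X):B − A:B‖ ≤ ‖(A+B)^† B‖² · ‖X‖. -/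
open scoped Matrix Matrix.Norms.L2Operator ComplexOrder

namespace MPAux

variable {n : ℕ}

local notation "Mat" => Matrix (Fin n) (Fin n) ℂ

lemma mpinv_unique {A B₁ B₂ : Mat} (h₁ : MPInv A B₁) (h₂ : MPInv A B₂) : B₁ = B₂ := by
  obtain ⟨a1, b1, c1, d1⟩ := h₁
  obtain ⟨a2, b2, c2, d2⟩ := h₂
  have hAB : A * B₁ = A * B₂ := by
    calc A * B₁ = (A * B₁)ᴴ := c1.symm
    _ = B₁ᴴ * Aᴴ := Matrix.conjTranspose_mul _ _
    _ = B₁ᴴ * (A * B₂ * A)ᴴ := by rw [a2]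
    _ = B₁ᴴ * (Aᴴ * (A * B₂)ᴴ) := by rw [Matrix.conjTranspose_mul (A * B₂) A]
    _ = (B₁ᴴ * Aᴴ) * (A * B₂) := by rw [c2, Matrix.mul_assoc]
    _ = (A * B₁)ᴴ * (A * B₂) := by rw [Matrix.conjTranspose_mul]
    _ = (A * B₁) * (A * B₂) := by rw [c1]
    _ = (A * B₁ * A) * B₂ := by rw [Matrix.mul_assoc (A * B₁) A B₂]
    _ = A * B₂ := by rw [a1]
  have hBA : B₁ * A = B₂ * A := by
    calc B₁ * A = (B₁ * A)ᴴ := d1.symm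
    _ = Aᴴ * B₁ᴴ := Matrix.conjTranspose_mul _ _
    _ = (A * (B₂ * A))ᴴ * B₁ᴴ := by rw [← Matrix.mul_assoc, a2]
    _ = ((B₂ * A)ᴴ * Aᴴ) * B₁ᴴ := by rw [Matrix.conjTranspose_mul A (B₂ * A)]
    _ = (B₂ * A) * (Aᴴ * B₁ᴴ) := by rw [d2, Matrix.mul_assoc]
    _ = (B₂ * A) * (B₁ * A)ᴴ := by rw [Matrix.conjTranspose_mul]
    _ = (B₂ * A) * (B₁ * A) := by rw [d1]
    _ = B₂ * (A * B₁ * A) := by rw [Matrix.mul_assoc, Matrix.mul_assoc]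
    _ = B₂ * A := by rw [a1]
  calc B₁ = B₁ * A * B₁ := b1.symm
  _ = B₁ * (A * B₂) := by rw [Matrix.mul_assoc, hAB]
  _ = (B₁ * A) * B₂ := by rw [Matrix.mul_assoc]
  _ = B₂ * A * B₂ := by rw [hBA]
  _ = B₂ := b2

lemma mpinv_isHermitian {A Ad : Mat} (hA : A.IsHermitian) (h : MPInv A Ad) :
    Ad.IsHermitian := by
  have h' : MPInv A Adᴴ := by
    obtain ⟨a1, b1, c1, d1⟩ := h
    refine ⟨?_, ?_, ?_, ?_⟩
    · have := congrArg Matrix.conjTranspose a1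
      simpa [Matrix.conjTranspose_mul, hA.eq, Matrix.mul_assoc] using this
    · have := congrArg Matrix.conjTranspose b1
      simpa [Matrix.conjTranspose_mul, hA.eq, Matrix.mul_assoc] using this
    · have e : A * Adᴴ = Ad * A := by
        calc A * Adᴴ = Aᴴ * Adᴴ := by rw [hA.eq]
        _ = (Ad * A)ᴴ := (Matrix.conjTranspose_mul Ad A).symm
        _ = Ad * A := d1.eq
      rw [e]; exact d1
    · have e : Adᴴ * A = A * Ad := by
        calc Adᴴ * A = Adᴴ * Aᴴ := by rw [hA.eq]
        _ = (A * Ad)ᴴ := (Matrix.conjTranspose_mul A Ad).symm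
        _ = A * Ad := c1.eq
      rw [e]; exact c1
  exact mpinv_unique h' h

lemma eq_zero_of_mulVec {M : Mat} (h : ∀ x : Fin n → ℂ, M *ᵥ x = 0) : M = 0 := by
  ext i j
  have := congrFun (h (Pi.single j 1)) i
  simpa using this

/-- If `0 ≤ B ≤ S` (in the Loewner order) and `Sd` is the MP inverse of `S`,
then `S * Sd * B = B` and `B * (Sd * S) = B`. -/
lemma range_absorb {S Sd B : Mat} (hS : S.PosSemidef) (hB : B.PosSemidef)
    (hdiff : (S - B).PosSemidef) (h : MPInv S Sd) :
    S * (Sd * B) = B ∧ B * (Sd * S) = B := by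
  have hSdH : Sdᴴ = Sd := (mpinv_isHermitian hS.isHermitian h).eq
  obtain ⟨a1, b1, c1, d1⟩ := h
  have hcomm : Sd * S = S * Sd := by
    calc Sd * S = (Sd * S)ᴴ := d1.eq.symm
    _ = Sᴴ * Sdᴴ := Matrix.conjTranspose_mul _ _
    _ = S * Sd := by rw [hS.isHermitian.eq, hSdH]
  set Q : Mat := 1 - S * Sd with hQ
  have hQH : Qᴴ = Q := by
    rw [hQ, Matrix.conjTranspose_sub, Matrix.conjTranspose_one, c1.eq]
  have hQS : Q * S = 0 := by
    rw [hQ, Matrix.sub_mul, Matrix.one_mul, Matrix.mul_assoc, ← Matrix.mul_assoc, a1, sub_self]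
  have hsum : Qᴴ * B * Q + Qᴴ * (S - B) * Q = 0 := by
    have e : Qᴴ * B * Q + Qᴴ * (S - B) * Q = Qᴴ * S * Q := by
      rw [← Matrix.add_mul, ← Matrix.mul_add]
      congr 2
      abel
    rw [e, hQH, hQS, Matrix.zero_mul]
  have hBQ : B * Q = 0 := by
    apply eq_zero_of_mulVec
    intro x
    have h1 : 0 ≤ star x ⬝ᵥ ((Qᴴ * B * Q) *ᵥ x) := (hB.conjTranspose_mul_mul_same Q).dotProduct_mulVec_nonneg x
    have h2 : 0 ≤ star x ⬝ᵥ ((Qᴴ * (S - B) * Q) *ᵥ x) := (hdiff.conjTranspose_mul_mul_same Q).dotProduct_mulVec_nonneg x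
    have h3 : star x ⬝ᵥ ((Qᴴ * B * Q) *ᵥ x) + star x ⬝ᵥ ((Qᴴ * (S - B) * Q) *ᵥ x) = 0 := by
      rw [← dotProduct_add, ← Matrix.add_mulVec, hsum, Matrix.zero_mulVec,
        dotProduct_zero]
    have h4 : star x ⬝ᵥ ((Qᴴ * B * Q) *ᵥ x) = 0 := by
      refine le_antisymm ?_ h1
      calc star x ⬝ᵥ ((Qᴴ * B * Q) *ᵥ x)
          = -(star x ⬝ᵥ ((Qᴴ * (S - B) * Q) *ᵥ x)) :=
            eq_neg_of_add_eq_zero_left h3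
      _ ≤ 0 := by simpa using h2
    have h5 : star x ⬝ᵥ ((Qᴴ * B * Q) *ᵥ x)
        = star (Q *ᵥ x) ⬝ᵥ (B *ᵥ (Q *ᵥ x)) := by
      simp only [Matrix.star_mulVec, Matrix.dotProduct_mulVec, Matrix.vecMul_vecMul, hQH]
    have h6 := (hB.dotProduct_mulVec_zero_iff (Q *ᵥ x)).mp (h5 ▸ h4)
    rw [Matrix.mulVec_mulVec] at h6
    exact h6
  have hBSSd : B * (S * Sd) = B := by
    have e : B * Q = B - B * (S * Sd) := by
      rw [hQ, Matrix.mul_sub, Matrix.mul_one]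
    rw [e] at hBQ
    exact (sub_eq_zero.mp hBQ).symm
  constructor
  · have e := congrArg Matrix.conjTranspose hBSSd
    rw [Matrix.conjTranspose_mul, Matrix.conjTranspose_mul, hB.isHermitian.eq,
      hS.isHermitian.eq, hSdH] at e
    calc S * (Sd * B) = (S * Sd) * B := by rw [Matrix.mul_assoc]
    _ = (Sd * S) * B := by rw [hcomm]
    _ = Sd * (S * B) := by rw [Matrix.mul_assoc]
    _ = B := by rw [← Matrix.mul_assoc]; exact e
  · rw [hcomm]
    exact hBSSd

lemma psd_smul {M : Mat} (hM : M.PosSemidef) {t : ℝ} (ht : 0 ≤ t) :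
    ((t : ℂ) • M).PosSemidef := by
  refine Matrix.PosSemidef.of_dotProduct_mulVec_nonneg ?_ ?_
  · rw [Matrix.IsHermitian, Matrix.conjTranspose_smul, hM.isHermitian.eq]
    congr 1
    simp [RCLike.star_def]
  · intro x
    rw [Matrix.smul_mulVec, dotProduct_smul, smul_eq_mul]
    exact mul_nonneg (by exact_mod_cast ht) (hM.dotProduct_mulVec_nonneg x)

lemma psd_le_norm_smul_one {X : Mat} (hX : X.PosSemidef) :
    ((‖X‖ : ℂ) • (1 : Mat) - X).PosSemidef := by
  refine Matrix.PosSemidef.of_dotProduct_mulVec_nonneg ?_ ?_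
  · rw [Matrix.IsHermitian, Matrix.conjTranspose_sub, Matrix.conjTranspose_smul,
      Matrix.conjTranspose_one, hX.isHermitian.eq]
    congr 1
    simp [RCLike.star_def]
  · intro x
    set y : EuclideanSpace ℂ (Fin n) := (WithLp.equiv 2 (Fin n → ℂ)).symm x with hy
    have hxy : star x ⬝ᵥ x = ((‖y‖ : ℂ)) ^ 2 := by
      have e0 : star x ⬝ᵥ x = inner ℂ y y := by rw [dotProduct_comm]; rfl
      rw [e0]; exact inner_self_eq_norm_sq_to_K y
    set c := star x ⬝ᵥ (X *ᵥ x) with hc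
    have hc0 : 0 ≤ c := hX.dotProduct_mulVec_nonneg x
    have hcim : c.im = 0 := ((Complex.le_def.mp hc0).2).symm
    have hcre : c.re ≤ ‖X‖ * (‖y‖ * ‖y‖) := by
      have e1 : c = inner ℂ y ((WithLp.equiv 2 (Fin n → ℂ)).symm (X *ᵥ x)) := by
        rw [hc, dotProduct_comm]; rfl
      calc c.re ≤ ‖c‖ := Complex.re_le_norm c
      _ = ‖(inner ℂ y ((WithLp.equiv 2 (Fin n → ℂ)).symm (X *ᵥ x)) : ℂ)‖ := by
        rw [e1]
      _ ≤ ‖y‖ * ‖(WithLp.equiv 2 (Fin n → ℂ)).symm (X *ᵥ x)‖ := norm_inner_le_norm _ _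
      _ ≤ ‖y‖ * (‖X‖ * ‖y‖) := by
        refine mul_le_mul_of_nonneg_left ?_ (norm_nonneg y)
        exact Matrix.l2_opNorm_mulVec X y
      _ = ‖X‖ * (‖y‖ * ‖y‖) := by ring
    have expand : star x ⬝ᵥ (((‖X‖ : ℂ) • (1 : Mat) - X) *ᵥ x)
        = (‖X‖ : ℂ) * (‖y‖ : ℂ) ^ 2 - c := by
      rw [Matrix.sub_mulVec, dotProduct_sub, Matrix.smul_mulVec,
        Matrix.one_mulVec, dotProduct_smul, smul_eq_mul, hxy, ← hc]
    have e2 : (‖X‖ : ℂ) * (‖y‖ : ℂ) ^ 2 = ((‖X‖ * (‖y‖ * ‖y‖) : ℝ) : ℂ) := by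
      push_cast
      ring
    rw [expand, e2, Complex.le_def]
    constructor
    · simp only [Complex.zero_re, Complex.sub_re, Complex.ofReal_re]
      linarith [hcre]
    · simp only [Complex.zero_im, Complex.sub_im, Complex.ofReal_im, hcim]
      ring

open scoped MatrixOrder in
lemma psd_norm_le {D E : Mat} (hD : D.PosSemidef) (hED : (E - D).PosSemidef) :
    ‖D‖ ≤ ‖E‖ := by
  set C := CFC.sqrt D with hCdef
  have hCH : Cᴴ = C := (Matrix.nonneg_iff_posSemidef.mp (CFC.sqrt_nonneg D)).isHermitian.eq
  have hC2 : C * C = D := CFC.sqrt_mul_sqrt_self D hD.nonneg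
  have hnorm : ‖D‖ = ‖C‖ * ‖C‖ := by
    rw [← hC2]
    nth_rewrite 1 [← hCH]
    exact Matrix.l2_opNorm_conjTranspose_mul_self C
  have bound : ∀ x : EuclideanSpace ℂ (Fin n),
      ‖(WithLp.equiv 2 (Fin n → ℂ)).symm (C *ᵥ x)‖ ≤ Real.sqrt ‖E‖ * ‖x‖ := by
    intro x
    set y : EuclideanSpace ℂ (Fin n) := (WithLp.equiv 2 (Fin n → ℂ)).symm (C *ᵥ x) with hy
    have h1 : ‖y‖ ^ 2 = RCLike.re (star (C *ᵥ (x : Fin n → ℂ)) ⬝ᵥ (C *ᵥ (x : Fin n → ℂ))) := by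
      have e0 : (inner ℂ y y : ℂ) = star (C *ᵥ (x : Fin n → ℂ)) ⬝ᵥ (C *ᵥ (x : Fin n → ℂ)) := by
        rw [dotProduct_comm]; rfl
      rw [← inner_self_eq_norm_sq (𝕜 := ℂ) y, e0]
    have h2 : star (C *ᵥ (x : Fin n → ℂ)) ⬝ᵥ (C *ᵥ (x : Fin n → ℂ))
        = star (x : Fin n → ℂ) ⬝ᵥ (D *ᵥ (x : Fin n → ℂ)) := by
      rw [Matrix.star_mulVec, hCH, Matrix.dotProduct_mulVec, Matrix.vecMul_vecMul, hC2,
        ← Matrix.dotProduct_mulVec]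
    have h3 : RCLike.re (star (x : Fin n → ℂ) ⬝ᵥ (D *ᵥ (x : Fin n → ℂ)))
        ≤ RCLike.re (star (x : Fin n → ℂ) ⬝ᵥ (E *ᵥ (x : Fin n → ℂ))) := by
      have hh := hED.re_dotProduct_nonneg (x : Fin n → ℂ)
      rw [Matrix.sub_mulVec, dotProduct_sub, map_sub] at hh
      linarith
    have h4 : RCLike.re (star (x : Fin n → ℂ) ⬝ᵥ (E *ᵥ (x : Fin n → ℂ))) ≤ ‖E‖ * ‖x‖ ^ 2 := by
      have e1 : star (x : Fin n → ℂ) ⬝ᵥ (E *ᵥ (x : Fin n → ℂ))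
          = inner ℂ x ((WithLp.equiv 2 (Fin n → ℂ)).symm (E *ᵥ (x : Fin n → ℂ))) := by
        rw [dotProduct_comm]
        rfl
      rw [e1]
      calc RCLike.re (inner ℂ x ((WithLp.equiv 2 (Fin n → ℂ)).symm (E *ᵥ (x : Fin n → ℂ))) : ℂ)
          ≤ ‖(inner ℂ x ((WithLp.equiv 2 (Fin n → ℂ)).symm (E *ᵥ (x : Fin n → ℂ))) : ℂ)‖ :=
            RCLike.re_le_norm _
      _ ≤ ‖x‖ * ‖(WithLp.equiv 2 (Fin n → ℂ)).symm (E *ᵥ (x : Fin n → ℂ))‖ :=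
            norm_inner_le_norm _ _
      _ ≤ ‖x‖ * (‖E‖ * ‖x‖) := by
            refine mul_le_mul_of_nonneg_left ?_ (norm_nonneg x)
            exact Matrix.l2_opNorm_mulVec E x
      _ = ‖E‖ * ‖x‖ ^ 2 := by ring
    have h5 : ‖y‖ ^ 2 ≤ ‖E‖ * ‖x‖ ^ 2 := by
      rw [h1, h2]
      exact le_trans h3 h4
    have h6 : ‖y‖ ≤ Real.sqrt ‖E‖ * ‖x‖ := by
      have := Real.sqrt_le_sqrt h5
      rwa [Real.sqrt_sq (norm_nonneg y), Real.sqrt_mul (norm_nonneg E),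
        Real.sqrt_sq (norm_nonneg x)] at this
    exact h6
  have hCnorm : ‖C‖ ≤ Real.sqrt ‖E‖ := by
    rw [Matrix.l2_opNorm_def]
    exact ContinuousLinearMap.opNorm_le_bound _ (Real.sqrt_nonneg _) fun x => bound x
  calc ‖D‖ = ‖C‖ * ‖C‖ := hnorm
  _ ≤ Real.sqrt ‖E‖ * Real.sqrt ‖E‖ :=
      mul_le_mul hCnorm hCnorm (norm_nonneg C) (Real.sqrt_nonneg _)
  _ = ‖E‖ := Real.mul_self_sqrt (norm_nonneg E)

end MPAux

set_option maxHeartbeats 1000000 in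
open MPAux in
/-- Anderson-Duffin norm bound for the one-sided perturbation. -/
theorem one_sided_perturbation_norm_le' {n : ℕ}
    (A B X Sd ABd : Matrix (Fin n) (Fin n) ℂ)
    (hA : A.PosSemidef) (hB : B.PosSemidef) (hX : X.PosSemidef)
    (hSd : MPInv (A + X + B) Sd) (hABd : MPInv (A + B) ABd) :
    ‖(A + X) * Sd * B - A * ABd * B‖ ≤ ‖ABd * B‖ ^ 2 * ‖X‖ := by
  by_cases hX0 : X = 0
  · subst hX0
    rw [add_zero] at hSd
    have he : Sd = ABd := mpinv_unique hSd hABd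
    subst he
    rw [add_zero, sub_self, norm_zero]
    rw [mul_zero]
  -- notation (opaque abbreviations, to keep rewriting predictable)
  obtain ⟨S, hSdef⟩ : ∃ S', S' = A + X + B := ⟨_, rfl⟩
  obtain ⟨T, hTdef⟩ : ∃ T', T' = A + B := ⟨_, rfl⟩
  rw [← hSdef] at hSd
  rw [← hTdef] at hABd
  obtain ⟨t, htdef⟩ : ∃ t' : ℝ, t' = ‖X‖ := ⟨_, rfl⟩
  have ht : 0 < t := htdef ▸ norm_pos_iff.mpr hX0
  have hS : S.PosSemidef := by rw [hSdef]; exact (hA.add hX).add hB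
  have hT : T.PosSemidef := by rw [hTdef]; exact hA.add hB
  have hBH : Bᴴ = B := hB.isHermitian.eq
  have hSdH : Sdᴴ = Sd := (mpinv_isHermitian hS.isHermitian hSd).eq
  have hABdH : ABdᴴ = ABd := (mpinv_isHermitian hT.isHermitian hABd).eq
  obtain ⟨sa, sb, sc, sd1⟩ := hSd
  obtain ⟨ta, tb, tc, td⟩ := hABd
  have c1 : ABd * T = T * ABd := by
    calc ABd * T = (ABd * T)ᴴ := td.eq.symm
    _ = Tᴴ * ABdᴴ := Matrix.conjTranspose_mul _ _
    _ = T * ABd := by rw [hT.isHermitian.eq, hABdH]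
  have range1 : S * (Sd * B) = B ∧ B * (Sd * S) = B := by
    refine range_absorb hS hB ?_ ⟨sa, sb, sc, sd1⟩
    have e : S - B = A + X := by rw [hSdef]; exact add_sub_cancel_right (A + X) B
    rw [e]
    exact hA.add hX
  have range2 : T * (ABd * B) = B ∧ B * (ABd * T) = B := by
    refine range_absorb hT hB ?_ ⟨ta, tb, tc, td⟩
    have e : T - B = A := by rw [hTdef]; exact add_sub_cancel_right A B
    rw [e]
    exact hA
  have rSSdB : S * (Sd * B) = B := range1.1
  have rBSdS : ∀ M : Matrix (Fin n) (Fin n) ℂ, B * (Sd * (S * M)) = B * M := by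
    intro M
    rw [← Matrix.mul_assoc Sd S M, ← Matrix.mul_assoc B (Sd * S) M, range1.2]
  have rTABdB : T * (ABd * B) = B := range2.1
  have rBABdTM : ∀ M : Matrix (Fin n) (Fin n) ℂ, B * (ABd * (T * M)) = B * M := by
    intro M
    rw [← Matrix.mul_assoc ABd T M, ← Matrix.mul_assoc B (ABd * T) M, range2.2]
  have hBP : B * (T * ABd) = B := by rw [← c1]; exact range2.2
  have rBTABdM : ∀ M : Matrix (Fin n) (Fin n) ℂ, B * (T * (ABd * M)) = B * M := by
    intro M
    rw [← Matrix.mul_assoc T ABd M, ← Matrix.mul_assoc B (T * ABd) M, hBP]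
  -- the regularized matrix V and its inverse R
  have hone_pd : ((t : ℂ) • (1 : Matrix (Fin n) (Fin n) ℂ)).PosDef := by
    refine Matrix.PosDef.of_dotProduct_mulVec_pos ?_ ?_
    · rw [Matrix.IsHermitian, Matrix.conjTranspose_smul, Matrix.conjTranspose_one]
      congr 1
      simp [RCLike.star_def]
    · intro x hx
      rw [Matrix.smul_mulVec, Matrix.one_mulVec, dotProduct_smul, smul_eq_mul]
      exact mul_pos (Complex.zero_lt_real.mpr ht) (Matrix.dotProduct_star_self_pos_iff.mpr hx)
  obtain ⟨V, hVdef⟩ : ∃ V', V' = T + (t : ℂ) • 1 := ⟨_, rfl⟩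
  have hV_pd : V.PosDef := by rw [hVdef]; exact Matrix.PosDef.posSemidef_add hT hone_pd
  have hdet : IsUnit V.det := hV_pd.det_pos.ne'.isUnit
  obtain ⟨R, hRdef⟩ : ∃ R', R' = V⁻¹ := ⟨_, rfl⟩
  have hRV : R * V = 1 := by rw [hRdef]; exact Matrix.nonsing_inv_mul V hdet
  have hVR : V * R = 1 := by rw [hRdef]; exact Matrix.mul_nonsing_inv V hdet
  have hRH : Rᴴ = R := by
    rw [hRdef, Matrix.conjTranspose_nonsing_inv, hV_pd.isHermitian.eq]
  have hR_psd : R.PosSemidef := by rw [hRdef]; exact hV_pd.inv.posSemidef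
  have rRVM : ∀ M : Matrix (Fin n) (Fin n) ℂ, R * (V * M) = M := by
    intro M
    rw [← Matrix.mul_assoc, hRV, Matrix.one_mul]
  have hVS : V - S = (t : ℂ) • 1 - X := by
    rw [hVdef, hTdef, hSdef]
    abel
  have hVS_psd : (V - S).PosSemidef := by
    rw [hVS, htdef]
    exact psd_le_norm_smul_one hX
  have hST_psd : (S - T).PosSemidef := by
    have e : S - T = X := by rw [hSdef, hTdef]; abel
    rw [e]; exact hX
  -- commutation facts
  have hABdTABd : ABd * (T * ABd) = ABd := by rw [← Matrix.mul_assoc]; exact tb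
  have hTABdT : T * (ABd * T) = T := by rw [← Matrix.mul_assoc]; exact ta
  have hPP : (T * ABd) * (T * ABd) = T * ABd := by
    rw [Matrix.mul_assoc, hABdTABd]
  have hABdV : ABd * V = V * ABd := by
    rw [hVdef, Matrix.mul_add, Matrix.add_mul, c1, mul_smul_comm, smul_mul_assoc,
      Matrix.mul_one, Matrix.one_mul]
  have hABdV' : ABd * V = ABd * T + (t : ℂ) • ABd := by
    rw [hVdef, Matrix.mul_add, mul_smul_comm, Matrix.mul_one]
  have hPV : (T * ABd) * V = V * (T * ABd) := by
    rw [hVdef, Matrix.mul_add, Matrix.add_mul, mul_smul_comm, smul_mul_assoc,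
      Matrix.mul_one, Matrix.one_mul]
    congr 1
    rw [Matrix.mul_assoc, ← c1]
  have hABdABdV : (ABd * ABd) * V = ABd + (t : ℂ) • (ABd * ABd) := by
    rw [hVdef, Matrix.mul_add, mul_smul_comm, Matrix.mul_one]
    congr 1
    rw [Matrix.mul_assoc, c1, hABdTABd]
  -- the key algebraic identity
  have cancelV : ∀ M N : Matrix (Fin n) (Fin n) ℂ, M * V = N * V → M = N := by
    intro M N h
    have h2 := congrArg (fun Z => Z * R) h
    simpa only [Matrix.mul_assoc, hVR, Matrix.mul_one] using h2
  have e5 : (t : ℂ) • (ABd * ABd) + (T * ABd) * (R * (T * ABd))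
      = ABd + ((t : ℂ) * (t : ℂ)) • (ABd * (R * ABd)) := by
    apply cancelV
    have eL : ((t : ℂ) • (ABd * ABd) + (T * ABd) * (R * (T * ABd))) * V
        = (t : ℂ) • (ABd + (t : ℂ) • (ABd * ABd)) + T * ABd := by
      rw [Matrix.add_mul, smul_mul_assoc, hABdABdV]
      congr 1
      rw [Matrix.mul_assoc (T * ABd) (R * (T * ABd)) V, Matrix.mul_assoc R (T * ABd) V,
        hPV, rRVM, hPP]
    have eR : (ABd + ((t : ℂ) * (t : ℂ)) • (ABd * (R * ABd))) * V
        = (ABd * T + (t : ℂ) • ABd) + ((t : ℂ) * (t : ℂ)) • (ABd * ABd) := by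
      rw [Matrix.add_mul, smul_mul_assoc, hABdV']
      congr 1
      rw [Matrix.mul_assoc ABd (R * ABd) V, Matrix.mul_assoc R ABd V, hABdV, rRVM]
    rw [eL, eR, smul_add, smul_smul, c1]
    abel
  -- lower bound for B Sd B (variational inequality against V)
  have q1 : B * (Sd * B) - B * (R * B)
      = (Sd * B - R * B)ᴴ * S * (Sd * B - R * B)
        + (R * B)ᴴ * (V - S) * (R * B) := by
    simp only [Matrix.conjTranspose_sub, Matrix.conjTranspose_mul, hSdH, hRH, hBH]
    simp only [Matrix.sub_mul, Matrix.mul_sub, Matrix.mul_assoc]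
    simp only [rSSdB, rBSdS, rRVM]
    abel
  -- positivity of D
  have q2 : B * (ABd * B) - B * (Sd * B)
      = (ABd * B - Sd * B)ᴴ * T * (ABd * B - Sd * B)
        + (Sd * B)ᴴ * (S - T) * (Sd * B) := by
    simp only [Matrix.conjTranspose_sub, Matrix.conjTranspose_mul, hSdH, hABdH, hBH]
    simp only [Matrix.sub_mul, Matrix.mul_sub, Matrix.mul_assoc]
    simp only [rSSdB, rTABdB, rBABdTM, rBSdS]
    abel
  -- consequence of e5 sandwiched by B
  have q3 : (t : ℂ) • (B * (ABd * (ABd * B))) + B * (R * B)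
      = B * (ABd * B) + ((t : ℂ) * (t : ℂ)) • (B * (ABd * (R * (ABd * B)))) := by
    have h := congrArg (fun M : Matrix (Fin n) (Fin n) ℂ => B * (M * B)) e5
    simp only [Matrix.mul_add, Matrix.add_mul, mul_smul_comm, smul_mul_assoc,
      Matrix.mul_assoc, rTABdB, rBTABdM] at h
    exact h
  -- assemble: E - D is PSD
  have hassemble : (t : ℂ) • (B * (ABd * (ABd * B)))
        - (B * (ABd * B) - B * (Sd * B))
      = ((t : ℂ) * (t : ℂ)) • (B * (ABd * (R * (ABd * B))))
        + ((Sd * B - R * B)ᴴ * S * (Sd * B - R * B)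
          + (R * B)ᴴ * (V - S) * (R * B)) := by
    rw [← q1]
    calc (t : ℂ) • (B * (ABd * (ABd * B))) - (B * (ABd * B) - B * (Sd * B))
        = ((t : ℂ) • (B * (ABd * (ABd * B))) + B * (R * B)) - B * (ABd * B)
          + (B * (Sd * B) - B * (R * B)) := by abel
    _ = (B * (ABd * B) + ((t : ℂ) * (t : ℂ)) • (B * (ABd * (R * (ABd * B)))))
          - B * (ABd * B) + (B * (Sd * B) - B * (R * B)) := by rw [q3]
    _ = ((t : ℂ) * (t : ℂ)) • (B * (ABd * (R * (ABd * B))))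
          + (B * (Sd * B) - B * (R * B)) := by abel
  have hsq_psd : (((t : ℂ) * (t : ℂ)) • (B * (ABd * (R * (ABd * B))))).PosSemidef := by
    have e : B * (ABd * (R * (ABd * B))) = (ABd * B)ᴴ * R * (ABd * B) := by
      simp [Matrix.conjTranspose_mul, hABdH, hBH, Matrix.mul_assoc]
    have e2 : ((t : ℂ) * (t : ℂ)) = ((t * t : ℝ) : ℂ) := by push_cast; ring
    rw [e, e2]
    exact psd_smul (hR_psd.conjTranspose_mul_mul_same (ABd * B)) (by positivity)
  have hED_psd : ((t : ℂ) • (B * (ABd * (ABd * B)))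
      - (B * (ABd * B) - B * (Sd * B))).PosSemidef := by
    rw [hassemble]
    exact hsq_psd.add ((hS.conjTranspose_mul_mul_same _).add
      (hVS_psd.conjTranspose_mul_mul_same _))
  have hD_psd : (B * (ABd * B) - B * (Sd * B)).PosSemidef := by
    rw [q2]
    exact (hT.conjTranspose_mul_mul_same _).add
      (hST_psd.conjTranspose_mul_mul_same _)
  -- rewrite the LHS of the theorem
  have hLHS : (A + X) * Sd * B - A * ABd * B = B * (ABd * B) - B * (Sd * B) := by
    have e1 : S - B = A + X := by rw [hSdef]; exact add_sub_cancel_right (A + X) B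
    have e2 : T - B = A := by rw [hTdef]; exact add_sub_cancel_right A B
    have e3 : (A + X) * Sd * B = B - B * (Sd * B) := by
      rw [← e1, Matrix.sub_mul, Matrix.sub_mul, Matrix.mul_assoc S Sd B,
        Matrix.mul_assoc B Sd B, rSSdB]
    have e4 : A * ABd * B = B - B * (ABd * B) := by
      rw [← e2, Matrix.sub_mul, Matrix.sub_mul, Matrix.mul_assoc T ABd B,
        Matrix.mul_assoc B ABd B, rTABdB]
    rw [e3, e4]
    abel
  -- final norm computation
  have hnormE : ‖(t : ℂ) • (B * (ABd * (ABd * B)))‖ = ‖ABd * B‖ ^ 2 * ‖X‖ := by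
    have e : B * (ABd * (ABd * B)) = (ABd * B)ᴴ * (ABd * B) := by
      simp [Matrix.conjTranspose_mul, hABdH, hBH, Matrix.mul_assoc]
    rw [e, norm_smul, Matrix.l2_opNorm_conjTranspose_mul_self, 
      Complex.norm_of_nonneg (le_of_lt ht), htdef]
    ring
  rw [hLHS, ← hnormE]
  exact psd_norm_le hD_psd hED_psd
end
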